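/- Let λ be a bounded measured lamination on the unit disk with Thurston norm ‖λ‖_Th, let I be a geodesic ray parametrized by arclength z_d (d ≥ 0) terminating at z ∈ S¹, and let λ_{I_d} be the restriction of λ to the geodesics crossing the subray I_d = {z_k : k ≥ d}. Then there is a constant C₂ depending only on the hyperbolic distance D₀ from 0 to z₀ = z_0 such that ∫_G |ẽ_z(ℓ)| dλ_{I_d}(ℓ) ≤ C₂ · ‖λ‖_Th · e^{−d} for all d ≥ 0; one may take C₂ = 8e^{D₀}cosh(D₀+1)/(1−e^{−1}). -/

import Mathlib

open Set MeasureTheory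

/-- The space of geodesics of the unit disk, identified with pairs of points of the
unit circle (the ideal endpoints). -/
def GeodD := {p : ℂ × ℂ // ‖p.1‖ = 1 ∧ ‖p.2‖ = 1}

noncomputable instance : MeasurableSpace GeodD := by unfold GeodD; infer_instance

/-- The hyperbolic geodesic of the unit disk with ideal endpoints `a, b`. -/
def geoDisk (a b : ℂ) : Set ℂ :=
  {w | ‖w‖ < 1 ∧
    ((starRingEnd ℂ) a * b).im * (‖w‖ ^ 2 + 1) =
      -2 * (((starRingEnd ℂ) b - (starRingEnd ℂ) a) * w).im}

/-- The hyperbolic (Poincaré) distance between two points of the unit disk. -/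
noncomputable def hypDist (u v : ℂ) : ℝ :=
  Real.log ((1 + ‖(u - v) / (1 - (starRingEnd ℂ) v * u)‖) /
    (1 - ‖(u - v) / (1 - (starRingEnd ℂ) v * u)‖))

/-- The set of geodesics crossing (intersecting) a subset `A` of the disk. -/
def crossD (A : Set ℂ) : Set GeodD := {g | (geoDisk g.1.1 g.1.2 ∩ A).Nonempty}

/-- A geodesic arc of unit hyperbolic length in the disk. -/
def IsUnitArcD (A : Set ℂ) : Prop :=
  ∃ g : ℝ → ℂ, (∀ s ∈ Icc (0:ℝ) 1, ‖g s‖ < 1) ∧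
    (∀ s ∈ Icc (0:ℝ) 1, ∀ t ∈ Icc (0:ℝ) 1, hypDist (g s) (g t) = |s - t|) ∧
    A = g '' Icc 0 1

/-- Masses of unit arcs; the Thurston norm is the supremum of this set. -/
def thSetD (μ : Measure GeodD) : Set ℝ :=
  {r | ∃ A, IsUnitArcD A ∧ r = (μ (crossD A)).toReal}

noncomputable def thNormD (μ : Measure GeodD) : ℝ := sSup (thSetD μ)

/-- A measured lamination: supported on a set of pairwise disjoint geodesics. -/
def IsLamD (μ : Measure GeodD) : Prop :=
  ∃ S : Set GeodD, μ Sᶜ = 0 ∧ (∀ g ∈ S, g.1.1 ≠ g.1.2) ∧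
    (∀ g ∈ S, ∀ g' ∈ S,
      geoDisk g.1.1 g.1.2 = geoDisk g'.1.1 g'.1.2 ∨
        Disjoint (geoDisk g.1.1 g.1.2) (geoDisk g'.1.1 g'.1.2))

/-- Boundedness of a measured lamination (finite Thurston norm). -/
def IsBoundedLamD (μ : Measure GeodD) : Prop :=
  IsLamD μ ∧ BddAbove (thSetD μ) ∧ ∀ A, IsUnitArcD A → μ (crossD A) ≠ ⊤

/-- `|ẽ_z|` as a function on the space of geodesics. -/
noncomputable def eAbs (z : ℂ) (g : GeodD) : ℝ :=
  ‖(z - g.1.1) * (z - g.1.2) / (g.1.1 - g.1.2)‖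

/-!
If a geodesic `g` with ideal endpoints `a, b` passes through `w`, then
`(1 - |w|²) |a - b| = 2 |w - a| |w - b|` and, for `|z| = 1`,
`|(z - w)(a - b)|² = |(z - a)(w - b)|² + |(z - b)(w - a)|²`; by AM-GM these give
`|ẽ_z(g)| ≤ 1 / P(w, z)` for the Poisson kernel `P`. Since `-log P(·, z)` is the Busemann function
of `z`, along a geodesic ray `t ↦ z_t` ending at `z` we get `P(z_t, z) = e^t P(z_0, z)`, and
Harnack's inequality gives `P(z_0, z) ≥ e^{-D₀}`. Hence every geodesic crossing `I_t` has
`|ẽ_z| ≤ e^{D₀ - t}`. Cutting `I_d` into the unit arcs `[d + n, d + n + 1]`, each crossed by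
`λ`-mass at most `‖λ‖_Th`, and summing the geometric series gives the bound with constant
`e^{D₀} / (1 - e⁻¹) ≤ C₂`.
-/

open ComplexConjugate Filter Topology

section GeodesicGeometry

variable {a b w z : ℂ}

/-- `geoDisk a b` is the circle through `a` and `b` orthogonal to the unit circle; multiplying its
equation by `2i a b` and using `conj a = a⁻¹`, `conj b = b⁻¹` gives this complex form. -/
lemma circle_eq_of_mem_geoDisk (ha : ‖a‖ = 1) (hb : ‖b‖ = 1) (hab : a ≠ b)
    (hw : w ∈ geoDisk a b) :
    (a + b) * (1 + w * conj w) = 2 * w + 2 * a * b * conj w := by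
  have ha0 : a ≠ 0 := by rintro rfl; simp at ha
  have hb0 : b ≠ 0 := by rintro rfl; simp at hb
  have h : ((conj a * b).im : ℂ) * (‖w‖ ^ 2 + 1) = -2 * (((conj b - conj a) * w).im : ℂ) := by
    exact_mod_cast hw.2
  rw [Complex.im_eq_sub_conj, Complex.im_eq_sub_conj, ← Complex.mul_conj'] at h
  simp only [map_mul, map_sub, Complex.conj_conj] at h
  rw [← Complex.inv_eq_conj ha, ← Complex.inv_eq_conj hb] at h
  field_simp at h
  apply mul_left_cancel₀ (sub_ne_zero.mpr hab)
  linear_combination -h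

lemma one_sub_norm_sq_mul_norm_sub_of_mem_geoDisk (ha : ‖a‖ = 1) (hb : ‖b‖ = 1) (hab : a ≠ b)
    (hw : w ∈ geoDisk a b) :
    (1 - ‖w‖ ^ 2) * ‖a - b‖ = 2 * (‖w - a‖ * ‖w - b‖) := by
  have ha0 : a ≠ 0 := by rintro rfl; simp at ha
  have hb0 : b ≠ 0 := by rintro rfl; simp at hb
  have hE := circle_eq_of_mem_geoDisk ha hb hab hw
  have hsq : ((1 - ‖w‖ ^ 2) * ‖a - b‖) ^ 2 = (2 * (‖w - a‖ * ‖w - b‖)) ^ 2 := by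
    simp only [mul_pow]
    apply Complex.ofReal_injective
    push_cast
    rw [← Complex.mul_conj' w, ← Complex.mul_conj' (a - b), ← Complex.mul_conj' (w - a),
      ← Complex.mul_conj' (w - b)]
    simp only [map_sub, ← Complex.inv_eq_conj ha, ← Complex.inv_eq_conj hb]
    field_simp
    linear_combination (-((a + b) * (1 + w * conj w) - 2 * w - 2 * a * b * conj w)) * hE
  have hw1 : 0 ≤ 1 - ‖w‖ ^ 2 := by nlinarith [hw.1, norm_nonneg w]
  exact (pow_left_inj₀ (by positivity) (by positivity) two_ne_zero).mp hsq

lemma norm_sq_add_norm_sq_of_mem_geoDisk (hz : ‖z‖ = 1) (ha : ‖a‖ = 1) (hb : ‖b‖ = 1)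
    (hab : a ≠ b) (hw : w ∈ geoDisk a b) :
    ‖(z - a) * (w - b)‖ ^ 2 + ‖(z - b) * (w - a)‖ ^ 2 = ‖(z - w) * (a - b)‖ ^ 2 := by
  have ha0 : a ≠ 0 := by rintro rfl; simp at ha
  have hb0 : b ≠ 0 := by rintro rfl; simp at hb
  have hz0 : z ≠ 0 := by rintro rfl; simp at hz
  have hE := circle_eq_of_mem_geoDisk ha hb hab hw
  -- the cross-ratio `(z - a)(w - b) / ((z - b)(w - a))` is purely imaginary
  have horth : (z - a) * (w - b) * conj ((z - b) * (w - a)) +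
      conj ((z - a) * (w - b)) * ((z - b) * (w - a)) = 0 := by
    simp only [map_mul, map_sub, ← Complex.inv_eq_conj ha, ← Complex.inv_eq_conj hb,
      ← Complex.inv_eq_conj hz]
    field_simp
    linear_combination (-(z - a) * (z - b)) * hE
  rw [show (z - w) * (a - b) = (z - a) * (w - b) - (z - b) * (w - a) by ring]
  generalize (z - a) * (w - b) = X at horth ⊢
  generalize (z - b) * (w - a) = Y at horth ⊢
  apply Complex.ofReal_injective
  push_cast
  rw [← Complex.mul_conj' X, ← Complex.mul_conj' Y, ← Complex.mul_conj' (X - Y), map_sub]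
  linear_combination horth

lemma eAbs_mul_one_sub_norm_sq_le (hz : ‖z‖ = 1) (g : GeodD)
    (hw : w ∈ geoDisk g.1.1 g.1.2) : eAbs z g * (1 - ‖w‖ ^ 2) ≤ ‖z - w‖ ^ 2 := by
  obtain ⟨⟨a, b⟩, ha, hb⟩ := g
  by_cases hab : a = b
  · simp [eAbs, hab]
  have hab' : 0 < ‖a - b‖ := norm_pos_iff.mpr (sub_ne_zero.mpr hab)
  have hchord := one_sub_norm_sq_mul_norm_sub_of_mem_geoDisk ha hb hab hw
  rw [← mul_le_mul_iff_left₀ (pow_pos hab' 2)]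
  calc eAbs z ⟨(a, b), ha, hb⟩ * (1 - ‖w‖ ^ 2) * ‖a - b‖ ^ 2
      = 2 * ‖(z - a) * (w - b)‖ * ‖(z - b) * (w - a)‖ := by
        simp only [eAbs, norm_div, norm_mul]
        field_simp
        linear_combination (‖z - a‖ * ‖z - b‖) * hchord
    _ ≤ ‖(z - a) * (w - b)‖ ^ 2 + ‖(z - b) * (w - a)‖ ^ 2 := two_mul_le_add_sq _ _
    _ = ‖z - w‖ ^ 2 * ‖a - b‖ ^ 2 := by
        rw [norm_sq_add_norm_sq_of_mem_geoDisk hz ha hb hab hw, norm_mul, mul_pow]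

end GeodesicGeometry

section HyperbolicDistance

lemma norm_one_sub_conj_mul_sq_sub_norm_sub_sq (u v : ℂ) :
    ‖1 - conj v * u‖ ^ 2 - ‖u - v‖ ^ 2 = (1 - ‖u‖ ^ 2) * (1 - ‖v‖ ^ 2) := by
  apply Complex.ofReal_injective
  push_cast
  rw [← Complex.mul_conj', ← Complex.mul_conj', ← Complex.mul_conj', ← Complex.mul_conj']
  simp only [map_sub, map_mul, map_one, Complex.conj_conj]
  ring

variable {u v : ℂ}

lemma exp_hypDist_mul (hu : ‖u‖ < 1) (hv : ‖v‖ < 1) :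
    Real.exp (hypDist u v) * ((1 - ‖u‖ ^ 2) * (1 - ‖v‖ ^ 2)) =
      (‖1 - conj v * u‖ + ‖u - v‖) ^ 2 := by
  have hpos : 0 < (1 - ‖u‖ ^ 2) * (1 - ‖v‖ ^ 2) := by
    apply mul_pos <;> nlinarith [norm_nonneg u, norm_nonneg v]
  have hM := norm_nonneg (u - v)
  have hN := norm_nonneg (1 - conj v * u)
  rw [← norm_one_sub_conj_mul_sq_sub_norm_sub_sq] at hpos ⊢
  rw [hypDist, norm_div]
  generalize ‖1 - conj v * u‖ = N at hpos hN ⊢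
  generalize ‖u - v‖ = M at hpos hM ⊢
  have hMN : M < N := by nlinarith
  have hNM : N - M ≠ 0 := by linarith
  have hN0 : N ≠ 0 := by linarith
  rw [show (1 + M / N) / (1 - M / N) = (N + M) / (N - M) by field_simp,
    Real.exp_log (div_pos (by linarith) (by linarith))]
  field_simp
  ring

lemma exp_neg_hypDist_zero (hv : ‖v‖ < 1) :
    Real.exp (-hypDist 0 v) = (1 - ‖v‖) / (1 + ‖v‖) := by
  rw [hypDist, Real.exp_neg, Real.exp_log (by apply div_pos <;> simp <;> linarith [norm_nonneg v])]
  simp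

end HyperbolicDistance

section PoissonKernel

variable {z w : ℂ}

lemma poissonKernel_zero_of_norm_eq_one (hz : ‖z‖ = 1) :
    poissonKernel 0 w z = (1 - ‖w‖ ^ 2) / ‖z - w‖ ^ 2 := by
  simp [poissonKernel, hz]

lemma poissonKernel_zero_pos (hz : ‖z‖ = 1) (hw : ‖w‖ < 1) : 0 < poissonKernel 0 w z := by
  rw [poissonKernel_zero_of_norm_eq_one hz]
  exact div_pos (by nlinarith [norm_nonneg w]) (pow_pos (by linarith [norm_sub_norm_le z w]) 2)

lemma eAbs_mul_poissonKernel_le_one (hz : ‖z‖ = 1) {g : GeodD}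
    (hw : w ∈ geoDisk g.1.1 g.1.2) : eAbs z g * poissonKernel 0 w z ≤ 1 := by
  have hzw : 0 < ‖z - w‖ ^ 2 := pow_pos (by linarith [norm_sub_norm_le z w, hw.1]) 2
  rw [poissonKernel_zero_of_norm_eq_one hz, mul_div_assoc', div_le_one hzw]
  exact eAbs_mul_one_sub_norm_sq_le hz g hw

lemma exp_neg_hypDist_zero_le_poissonKernel (hz : ‖z‖ = 1) (hw : ‖w‖ < 1) :
    Real.exp (-hypDist 0 w) ≤ poissonKernel 0 w z := by
  rw [exp_neg_hypDist_zero hw, poissonKernel_eq_re_herglotzRieszKernel]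
  simpa [herglotzRieszKernel, hz] using
    le_re_herglotzRieszKernel (c := 0) (R := 1) (w := w) (by simpa using hz) (by simpa using hw)

lemma tendsto_exp_hypDist_mul_one_sub_norm_sq (hz : ‖z‖ = 1) {u : ℂ} (hu : ‖u‖ < 1) :
    Tendsto (fun v => Real.exp (hypDist u v) * (1 - ‖v‖ ^ 2)) (𝓝[Metric.ball 0 1] z)
      (𝓝 (4 / poissonKernel 0 u z)) := by
  have hu2 : 1 - ‖u‖ ^ 2 ≠ 0 := by nlinarith [norm_nonneg u]
  have hformula : ∀ᶠ v in 𝓝[Metric.ball 0 1] z, (‖1 - conj v * u‖ + ‖u - v‖) ^ 2 / (1 - ‖u‖ ^ 2)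
      = Real.exp (hypDist u v) * (1 - ‖v‖ ^ 2) := by
    filter_upwards [self_mem_nhdsWithin] with v hv
    rw [← exp_hypDist_mul hu (by simpa using hv)]
    field_simp
  have hz' : 1 - conj z * u = conj z * (z - u) := by
    rw [mul_sub, ← Complex.inv_eq_conj hz, inv_mul_cancel₀ (by rintro rfl; simp at hz)]
  have hlim : (‖1 - conj z * u‖ + ‖u - z‖) ^ 2 / (1 - ‖u‖ ^ 2) = 4 / poissonKernel 0 u z := by
    rw [poissonKernel_zero_of_norm_eq_one hz, hz', norm_mul, Complex.norm_conj, hz, norm_sub_rev u]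
    field_simp
    ring
  refine Tendsto.congr' hformula ?_
  rw [← hlim]
  exact tendsto_nhdsWithin_of_tendsto_nhds (Continuous.tendsto (by fun_prop) z)

end PoissonKernel

section GeodesicRay

variable {f : ℝ → ℂ} {z : ℂ}

lemma isUnitArcD_image_Icc (hin : ∀ s, 0 ≤ s → ‖f s‖ < 1)
    (hiso : ∀ s t, 0 ≤ s → 0 ≤ t → hypDist (f s) (f t) = |s - t|) {c : ℝ} (hc : 0 ≤ c) :
    IsUnitArcD (f '' Icc c (c + 1)) := by
  refine ⟨fun s => f (c + s), fun s hs => hin _ (by linarith [hs.1]), fun s hs t ht => ?_, ?_⟩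
  · rw [hiso _ _ (by linarith [hs.1]) (by linarith [ht.1]), add_sub_add_left_eq_sub]
  · rw [← image_image f (c + ·), image_const_add_Icc, add_zero]

lemma tendsto_exp_mul_one_sub_norm_sq_of_isometry (hz : ‖z‖ = 1)
    (hin : ∀ s, 0 ≤ s → ‖f s‖ < 1)
    (hiso : ∀ s t, 0 ≤ s → 0 ≤ t → hypDist (f s) (f t) = |s - t|)
    (hlim : Tendsto f atTop (𝓝 z)) {s : ℝ} (hs : 0 ≤ s) :
    Tendsto (fun t => Real.exp t * (1 - ‖f t‖ ^ 2)) atTop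
      (𝓝 (Real.exp s * (4 / poissonKernel 0 (f s) z))) := by
  have hray : Tendsto f atTop (𝓝[Metric.ball 0 1] z) :=
    tendsto_nhdsWithin_iff.mpr
      ⟨hlim, eventually_atTop.mpr ⟨0, fun t ht => by simpa using hin t ht⟩⟩
  refine (((tendsto_exp_hypDist_mul_one_sub_norm_sq hz (hin s hs)).comp hray).const_mul
    (Real.exp s)).congr' ?_
  filter_upwards [eventually_ge_atTop s] with t ht
  rw [Function.comp_apply, hiso s t hs (hs.trans ht), abs_sub_comm,
    abs_of_nonneg (sub_nonneg.mpr ht), ← mul_assoc, ← Real.exp_add, add_sub_cancel]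

lemma poissonKernel_zero_apply_isometry (hz : ‖z‖ = 1)
    (hin : ∀ s, 0 ≤ s → ‖f s‖ < 1)
    (hiso : ∀ s t, 0 ≤ s → 0 ≤ t → hypDist (f s) (f t) = |s - t|)
    (hlim : Tendsto f atTop (𝓝 z)) {s t : ℝ} (hs : 0 ≤ s) (ht : 0 ≤ t) :
    poissonKernel 0 (f t) z = Real.exp (t - s) * poissonKernel 0 (f s) z := by
  have h := tendsto_nhds_unique (tendsto_exp_mul_one_sub_norm_sq_of_isometry hz hin hiso hlim hs)
    (tendsto_exp_mul_one_sub_norm_sq_of_isometry hz hin hiso hlim ht)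
  have hPs := (poissonKernel_zero_pos hz (hin s hs)).ne'
  have hPt := (poissonKernel_zero_pos hz (hin t ht)).ne'
  rw [Real.exp_sub]
  field_simp at h ⊢
  linear_combination h

lemma eAbs_le_of_mem_crossD_image_Ici (hz : ‖z‖ = 1)
    (hin : ∀ s, 0 ≤ s → ‖f s‖ < 1)
    (hiso : ∀ s t, 0 ≤ s → 0 ≤ t → hypDist (f s) (f t) = |s - t|)
    (hlim : Tendsto f atTop (𝓝 z)) {s : ℝ} (hs : 0 ≤ s) {g : GeodD}
    (hg : g ∈ crossD (f '' Ici s)) :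
    eAbs z g ≤ Real.exp (hypDist 0 (f 0)) * Real.exp (-s) := by
  obtain ⟨_, hw, t, ht, rfl⟩ := hg
  have ht0 : 0 ≤ t := hs.trans ht
  have hPt : poissonKernel 0 (f t) z = Real.exp t * poissonKernel 0 (f 0) z := by
    rw [poissonKernel_zero_apply_isometry hz hin hiso hlim le_rfl ht0, sub_zero]
  have hharnack : (poissonKernel 0 (f 0) z)⁻¹ ≤ Real.exp (hypDist 0 (f 0)) :=
    inv_le_of_inv_le₀ (Real.exp_pos _)
      (by simpa [Real.exp_neg] using exp_neg_hypDist_zero_le_poissonKernel hz (hin 0 le_rfl))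
  calc eAbs z g ≤ (poissonKernel 0 (f t) z)⁻¹ := by
        rw [← one_div, le_div_iff₀ (poissonKernel_zero_pos hz (hin t ht0))]
        exact eAbs_mul_poissonKernel_le_one hz hw
    _ = Real.exp (-t) * (poissonKernel 0 (f 0) z)⁻¹ := by rw [hPt, mul_inv, Real.exp_neg]
    _ ≤ Real.exp (-s) * Real.exp (hypDist 0 (f 0)) :=
        mul_le_mul (Real.exp_le_exp.mpr (neg_le_neg ht)) hharnack
          (inv_nonneg.mpr (poissonKernel_zero_pos hz (hin 0 le_rfl)).le) (Real.exp_pos _).le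
    _ = Real.exp (hypDist 0 (f 0)) * Real.exp (-s) := mul_comm _ _

end GeodesicRay

lemma setLIntegral_le_of_subset_iUnion_geometric {α : Type*} [MeasurableSpace α]
    {μ : Measure α} {F : α → ENNReal} {t : Set α} {s : ℕ → Set α} {c r : ℝ}
    (hc : 0 ≤ c) (hr₀ : 0 ≤ r) (hr₁ : r < 1) (hts : t ⊆ ⋃ n, s n)
    (hs : ∀ n, ∫⁻ x in s n, F x ∂μ ≤ ENNReal.ofReal (c * r ^ n)) :
    ∫⁻ x in t, F x ∂μ ≤ ENNReal.ofReal (c / (1 - r)) :=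
  calc ∫⁻ x in t, F x ∂μ ≤ ∫⁻ x in ⋃ n, s n, F x ∂μ := lintegral_mono_set hts
    _ ≤ ∑' n, ∫⁻ x in s n, F x ∂μ := lintegral_iUnion_le _ _
    _ ≤ ∑' n, ENNReal.ofReal (c * r ^ n) := ENNReal.tsum_le_tsum hs
    _ = ENNReal.ofReal (∑' n, c * r ^ n) :=
        (ENNReal.ofReal_tsum_of_nonneg (fun n => by positivity)
          ((summable_geometric_of_lt_one hr₀ hr₁).mul_left c)).symm
    _ = ENNReal.ofReal (c / (1 - r)) := by
        rw [tsum_mul_left, tsum_geometric_of_lt_one hr₀ hr₁, div_eq_mul_inv]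

lemma crossD_mono {A B : Set ℂ} (hAB : A ⊆ B) : crossD A ⊆ crossD B :=
  fun _ ⟨w, hw, hwA⟩ => ⟨w, hw, hAB hwA⟩

lemma crossD_image_Ici_subset_iUnion (f : ℝ → ℂ) (d : ℝ) :
    crossD (f '' Ici d) ⊆ ⋃ n : ℕ, crossD (f '' Icc (d + n) (d + n + 1)) := by
  rintro g ⟨w, hwg, t, ht, rfl⟩
  refine mem_iUnion.mpr ⟨⌊t - d⌋₊, f t, hwg, t, ⟨?_, ?_⟩, rfl⟩
  · linarith [Nat.floor_le (sub_nonneg.mpr (mem_Ici.mp ht))]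
  · linarith [Nat.lt_floor_add_one (t - d)]

section BoundedLamination

variable {μ : Measure GeodD}

lemma measure_crossD_le_thNormD (hμ : IsBoundedLamD μ) {A : Set ℂ} (hA : IsUnitArcD A) :
    μ (crossD A) ≤ ENNReal.ofReal (thNormD μ) := by
  rw [← ENNReal.ofReal_toReal (hμ.2.2 A hA)]
  exact ENNReal.ofReal_le_ofReal (le_csSup hμ.2.1 ⟨A, hA, rfl⟩)

lemma thNormD_nonneg (hμ : BddAbove (thSetD μ)) {A : Set ℂ} (hA : IsUnitArcD A) :
    0 ≤ thNormD μ :=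
  ENNReal.toReal_nonneg.trans (le_csSup hμ ⟨A, hA, rfl⟩)

lemma setLIntegral_eAbs_crossD_image_Icc_le {f : ℝ → ℂ} {z : ℂ} (hμ : IsBoundedLamD μ)
    (hz : ‖z‖ = 1) (hin : ∀ s, 0 ≤ s → ‖f s‖ < 1)
    (hiso : ∀ s t, 0 ≤ s → 0 ≤ t → hypDist (f s) (f t) = |s - t|)
    (hlim : Tendsto f atTop (𝓝 z)) {c : ℝ} (hc : 0 ≤ c) :
    ∫⁻ g in crossD (f '' Icc c (c + 1)), ENNReal.ofReal (eAbs z g) ∂μ ≤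
      ENNReal.ofReal (Real.exp (hypDist 0 (f 0)) * Real.exp (-c) * thNormD μ) :=
  calc ∫⁻ g in crossD (f '' Icc c (c + 1)), ENNReal.ofReal (eAbs z g) ∂μ
      ≤ ∫⁻ _ in crossD (f '' Icc c (c + 1)),
          ENNReal.ofReal (Real.exp (hypDist 0 (f 0)) * Real.exp (-c)) ∂μ :=
        setLIntegral_mono measurable_const fun _ hg => ENNReal.ofReal_le_ofReal <|
          eAbs_le_of_mem_crossD_image_Ici hz hin hiso hlim hc <|
            crossD_mono (image_mono Icc_subset_Ici_self) hg
    _ = ENNReal.ofReal (Real.exp (hypDist 0 (f 0)) * Real.exp (-c)) *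
          μ (crossD (f '' Icc c (c + 1))) := setLIntegral_const _ _
    _ ≤ ENNReal.ofReal (Real.exp (hypDist 0 (f 0)) * Real.exp (-c)) *
          ENNReal.ofReal (thNormD μ) := by
        gcongr
        exact measure_crossD_le_thNormD hμ (isUnitArcD_image_Icc hin hiso hc)
    _ = ENNReal.ofReal (Real.exp (hypDist 0 (f 0)) * Real.exp (-c) * thNormD μ) :=
        (ENNReal.ofReal_mul (by positivity)).symm

end BoundedLamination

theorem eTilde_integral_decay_general (μ : Measure GeodD)
    (hbdd : IsBoundedLamD μ)
    (z : ℂ) (hz : ‖z‖ = 1) (f : ℝ → ℂ)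
    (hin : ∀ s, 0 ≤ s → ‖f s‖ < 1)
    (hiso : ∀ s t, 0 ≤ s → 0 ≤ t → hypDist (f s) (f t) = |s - t|)
    (hlim : Filter.Tendsto f Filter.atTop (nhds z))
    (D₀ : ℝ) (hD₀ : D₀ = hypDist 0 (f 0)) :
    ∀ d : ℝ, 0 ≤ d →
      (∫⁻ g, ENNReal.ofReal (eAbs z g) ∂(μ.restrict (crossD (f '' Ici d)))) ≤
        ENNReal.ofReal
          ((8 * Real.exp D₀ * Real.cosh (D₀ + 1) / (1 - Real.exp (-1))) *
            thNormD μ * Real.exp (-d)) := by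
  intro d hd
  have hT := thNormD_nonneg hbdd.2.1 (isUnitArcD_image_Icc hin hiso le_rfl)
  have he : Real.exp (-1) < 1 := Real.exp_lt_one_iff.mpr (by norm_num)
  have hpiece (n : ℕ) :
      ∫⁻ g in crossD (f '' Icc (d + n) (d + n + 1)), ENNReal.ofReal (eAbs z g) ∂μ ≤
        ENNReal.ofReal (Real.exp D₀ * Real.exp (-d) * thNormD μ * Real.exp (-1) ^ n) := by
    refine (setLIntegral_eAbs_crossD_image_Icc_le hbdd hz hin hiso hlim (by positivity)).trans_eq ?_
    rw [← hD₀, ← Real.exp_nat_mul, show -(d + n) = -d + n * -1 by ring, Real.exp_add]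
    congr 1
    ring
  calc _ ≤ ENNReal.ofReal (Real.exp D₀ * Real.exp (-d) * thNormD μ / (1 - Real.exp (-1))) :=
        setLIntegral_le_of_subset_iUnion_geometric (by positivity) (Real.exp_pos _).le he
          (crossD_image_Ici_subset_iUnion f d) hpiece
    _ ≤ _ := by
        refine ENNReal.ofReal_le_ofReal ?_
        have hC : 1 ≤ 8 * Real.cosh (D₀ + 1) := by linarith [Real.one_le_cosh (D₀ + 1)]
        calc _ ≤ 8 * Real.cosh (D₀ + 1) *
              (Real.exp D₀ * Real.exp (-d) * thNormD μ / (1 - Real.exp (-1))) :=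
            le_mul_of_one_le_left (div_nonneg (by positivity) (by linarith)) hC
          _ = _ := by ring

/-- Rate of decay: for a bounded measured lamination `λ`, a geodesic ray `I`
parametrized by arclength `z_d = f d` terminating at `z ∈ S¹`, and `λ_{I_d}` the
restriction of `λ` to the geodesics crossing the subray `I_d = f(Ici d)`, one has
`∫ |ẽ_z| dλ_{I_d} ≤ C₂ ‖λ‖_Th e^{-d}` for all `d ≥ 0`, with
`C₂ = 8 e^{D₀} cosh(D₀+1)/(1-e⁻¹)` depending only on the distance `D₀` from `0` to
the initial point `z₀ = f 0` of the ray. -/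
theorem eTilde_integral_decay (μ : Measure GeodD)
    (hlam : IsLamD μ) (hbdd : IsBoundedLamD μ)
    (z : ℂ) (hz : ‖z‖ = 1) (f : ℝ → ℂ)
    (hin : ∀ s, 0 ≤ s → ‖f s‖ < 1)
    (hiso : ∀ s t, 0 ≤ s → 0 ≤ t → hypDist (f s) (f t) = |s - t|)
    (hlim : Filter.Tendsto f Filter.atTop (nhds z))
    (D₀ : ℝ) (hD₀ : D₀ = hypDist 0 (f 0)) :
    ∀ d : ℝ, 0 ≤ d →
      (∫⁻ g, ENNReal.ofReal (eAbs z g) ∂(μ.restrict (crossD (f '' Ici d)))) ≤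
        ENNReal.ofReal
          ((8 * Real.exp D₀ * Real.cosh (D₀ + 1) / (1 - Real.exp (-1))) *
            thNormD μ * Real.exp (-d)) :=
  eTilde_integral_decay_general μ hbdd z hz f hin hiso hlim D₀ hD₀
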